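/- Let A ∈ M_n(ℂ) be an upper triangular matrix with constant diagonal (A_{ii} = α for all i) such that all superdiagonal entries A_{i,i+1} are nonzero. Then the commutant of A equals the commutant of the Jordan block it is similar to; in particular, dim {A}' = n and {A}' is generated as an algebra by A and I. -/
import Mathlib

open Matrix Finset

/-- The `n×n` Jordan block with eigenvalue `α`. -/
def jordanBlock (n : ℕ) (α : ℂ) : Matrix (Fin n) (Fin n) ℂ :=
  fun i j => if (i : ℕ) = (j : ℕ) then α else if (i : ℕ) + 1 = (j : ℕ) then 1 else 0

namespace Stmt17Aux

variable {n : ℕ} {α : ℂ} {A : Matrix (Fin n) (Fin n) ℂ}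

def ev (n : ℕ) (hn : 0 < n) : Fin n → ℂ := Pi.single ⟨n-1, by omega⟩ 1

lemma Nzero (hupper : ∀ i j : Fin n, (j : ℕ) < (i : ℕ) → A i j = 0)
    (hdiag : ∀ i : Fin n, A i i = α) {i j : Fin n} (h : (j:ℕ) ≤ i) :
    (A - α • 1) i j = 0 := by
  rcases eq_or_lt_of_le h with h | h
  · have hji : j = i := Fin.ext h
    subst hji
    simp [Matrix.sub_apply, hdiag, Matrix.smul_apply, Matrix.one_apply]
  · have hne : i ≠ j := fun hh => absurd (hh ▸ h) (lt_irrefl _)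
    simp [Matrix.sub_apply, hupper i j h, Matrix.smul_apply, Matrix.one_apply_ne hne]

lemma vanish (hupper : ∀ i j : Fin n, (j : ℕ) < (i : ℕ) → A i j = 0)
    (hdiag : ∀ i : Fin n, A i i = α) (e : Fin n → ℂ) :
    ∀ (k : ℕ) (j : Fin n), n < (j:ℕ) + k + 1 →
      ((A - α • 1) ^ k).mulVec e j = 0 := by
  intro k
  induction k with
  | zero => intro j hj; exact absurd hj (by omega)
  | succ k ih =>
    intro j hj
    rw [pow_succ', ← Matrix.mulVec_mulVec]
    simp only [Matrix.mulVec, dotProduct]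
    apply Finset.sum_eq_zero
    intro m _
    rcases le_or_gt (m:ℕ) (j:ℕ) with hm | hm
    · rw [Nzero hupper hdiag hm, zero_mul]
    · have h2 := ih m (by omega)
      simp only [Matrix.mulVec, dotProduct] at h2
      rw [h2, mul_zero]

lemma nonvanish (hupper : ∀ i j : Fin n, (j : ℕ) < (i : ℕ) → A i j = 0)
    (hdiag : ∀ i : Fin n, A i i = α)
    (hsuper : ∀ i : Fin n, ∀ h : (i : ℕ) + 1 < n, A i ⟨(i : ℕ) + 1, h⟩ ≠ 0)
    (hn : 0 < n) :
    ∀ (k : ℕ) (_ : k < n),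
      ((A - α • 1) ^ k).mulVec (ev n hn) ⟨n-1-k, by omega⟩ ≠ 0 := by
  intro k
  induction k with
  | zero =>
    intro hk
    rw [pow_zero, Matrix.one_mulVec]
    simp [ev, Pi.single_apply]
  | succ k ih =>
    intro hk
    rw [pow_succ', ← Matrix.mulVec_mulVec]
    set e : Fin n → ℂ := ev n hn with he
    set j : Fin n := ⟨n-1-(k+1), by omega⟩ with hjdef
    set m₀ : Fin n := ⟨n-1-k, by omega⟩ with hm0
    have hjval : (j : ℕ) = n-1-(k+1) := rfl
    have hm0val : (m₀ : ℕ) = n-1-k := rfl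
    have hsum : ((A - α • 1).mulVec (((A - α • 1) ^ k).mulVec e)) j
        = (A - α • 1) j m₀ * (((A - α • 1) ^ k).mulVec e) m₀ := by
      show ∑ m : Fin n, (A - α • 1) j m * (((A - α • 1) ^ k).mulVec e) m = _
      apply Finset.sum_eq_single
      · intro b _ hb
        have hbval : (b : ℕ) ≠ n-1-k := fun h => hb (Fin.ext h)
        rcases le_or_gt (b:ℕ) (j:ℕ) with h | h
        · rw [Nzero hupper hdiag h, zero_mul]
        · rw [vanish hupper hdiag e k b (by omega), mul_zero]
      · intro h; exact absurd (Finset.mem_univ m₀) h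
    rw [hsum]
    apply mul_ne_zero
    · have hne : j ≠ m₀ := by
        intro h
        have := congrArg (Fin.val) h
        simp only [hjval, hm0val] at this
        omega
      have hm0j : (m₀ : ℕ) = (j : ℕ) + 1 := by omega
      have h1 : (j : ℕ) + 1 < n := by omega
      have hNA : (A - α • 1) j m₀ = A j m₀ := by
        simp [Matrix.sub_apply, Matrix.smul_apply, Matrix.one_apply_ne hne]
      rw [hNA]
      have := hsuper j h1
      convert this using 2
      exact Fin.ext hm0j
    · have := ih (by omega)
      convert this using 2

lemma linIndep (hupper : ∀ i j : Fin n, (j : ℕ) < (i : ℕ) → A i j = 0)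
    (hdiag : ∀ i : Fin n, A i i = α)
    (hsuper : ∀ i : Fin n, ∀ h : (i : ℕ) + 1 < n, A i ⟨(i : ℕ) + 1, h⟩ ≠ 0)
    (hn : 0 < n) :
    LinearIndependent ℂ (fun k : Fin n => ((A - α • 1)^(k:ℕ)).mulVec (ev n hn)) := by
  rw [Fintype.linearIndependent_iff]
  intro c hc
  suffices key : ∀ m : ℕ, ∀ i : Fin n, (i:ℕ) = m → c i = 0 by
    intro i; exact key (i:ℕ) i rfl
  intro m
  induction m using Nat.strong_induction_on with
  | _ m ihm =>
    intro i him
    have ih : ∀ b : Fin n, (b:ℕ) < (i:ℕ) → c b = 0 := fun b hb =>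
      ihm (b:ℕ) (him ▸ hb) b rfl
    have h0 := congrFun hc (⟨n-1-(i:ℕ), by omega⟩ : Fin n)
    rw [Finset.sum_apply] at h0
    have hsum : ∑ k : Fin n,
        (c k • ((A - α • 1)^(k:ℕ)).mulVec (ev n hn)) (⟨n-1-(i:ℕ), by omega⟩ : Fin n)
        = c i * ((A - α • 1)^(i:ℕ)).mulVec (ev n hn) (⟨n-1-(i:ℕ), by omega⟩ : Fin n) := by
      rw [Finset.sum_eq_single i]
      · simp
      · intro b _ hb
        rcases lt_or_gt_of_ne (fun h : (b:ℕ) = (i:ℕ) => hb (Fin.ext h)) with h | h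
        · rw [Pi.smul_apply, ih b h, zero_smul]
        · rw [Pi.smul_apply,
            vanish hupper hdiag (ev n hn) (b:ℕ) _ (by simp only []; omega), smul_zero]
      · intro h; exact absurd (Finset.mem_univ i) h
    rw [hsum] at h0
    rcases mul_eq_zero.mp h0 with h | h
    · exact h
    · exact absurd h (nonvanish hupper hdiag hsuper hn (i:ℕ) i.isLt)

lemma binom (k : ℕ) : (A - α • 1)^k
    = ∑ m ∈ Finset.range (k+1), ((-α)^(k-m) * (k.choose m : ℂ)) • A^m := by
  have hcomm : Commute A (-(α • (1 : Matrix (Fin n) (Fin n) ℂ))) :=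
    ((Commute.one_right A).smul_right α).neg_right
  rw [sub_eq_add_neg, hcomm.add_pow]
  refine Finset.sum_congr rfl fun m _ => ?_
  have h1 : (-(α • (1 : Matrix (Fin n) (Fin n) ℂ))) ^ (k - m)
      = ((-α)^(k-m)) • 1 := by
    rw [← neg_smul, smul_pow, one_pow]
  rw [h1, mul_smul_comm, mul_one]
  have h2 : (A ^ m * ((k.choose m : ℂ) • 1)) = (k.choose m : ℂ) • A ^ m := by
    rw [mul_smul_comm, mul_one]
  rw [show ((k.choose m : Matrix (Fin n) (Fin n) ℂ)) = (k.choose m : ℂ) • 1 by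
    simp [Nat.cast_smul_eq_nsmul]]
  rw [smul_mul_assoc, h2, smul_smul, mul_comm]

/-- Evaluation at `ev` as a linear map in the matrix. -/
noncomputable def evalMap (n : ℕ) (hn : 0 < n) :
    Matrix (Fin n) (Fin n) ℂ →ₗ[ℂ] (Fin n → ℂ) where
  toFun M := M.mulVec (ev n hn)
  map_add' M N := Matrix.add_mulVec M N (ev n hn)
  map_smul' a M := Matrix.smul_mulVec a M (ev n hn)

lemma span_v_top (hupper : ∀ i j : Fin n, (j : ℕ) < (i : ℕ) → A i j = 0)
    (hdiag : ∀ i : Fin n, A i i = α)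
    (hsuper : ∀ i : Fin n, ∀ h : (i : ℕ) + 1 < n, A i ⟨(i : ℕ) + 1, h⟩ ≠ 0)
    (hn : 0 < n) :
    Submodule.span ℂ
      (Set.range (fun k : Fin n => ((A - α • 1)^(k:ℕ)).mulVec (ev n hn))) = ⊤ := by
  have hcard : Fintype.card (Fin n) = Module.finrank ℂ (Fin n → ℂ) := by
    simp [Module.finrank_pi]
  have : Nonempty (Fin n) := ⟨⟨0, hn⟩⟩
  rw [← coe_basisOfLinearIndependentOfCardEqFinrank
    (linIndep hupper hdiag hsuper hn) hcard]
  exact Module.Basis.span_eq _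

lemma span_Apow_top (hupper : ∀ i j : Fin n, (j : ℕ) < (i : ℕ) → A i j = 0)
    (hdiag : ∀ i : Fin n, A i i = α)
    (hsuper : ∀ i : Fin n, ∀ h : (i : ℕ) + 1 < n, A i ⟨(i : ℕ) + 1, h⟩ ≠ 0)
    (hn : 0 < n) :
    Submodule.span ℂ (Set.range (fun k : Fin n => (A^(k:ℕ)).mulVec (ev n hn))) = ⊤ := by
  rw [eq_top_iff, ← span_v_top hupper hdiag hsuper hn, Submodule.span_le]
  rintro x ⟨k, rfl⟩
  simp only []
  rw [binom (k:ℕ)]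
  rw [show (∑ m ∈ Finset.range ((k:ℕ)+1),
        ((-α)^((k:ℕ)-m) * ((k:ℕ).choose m : ℂ)) • A^m).mulVec (ev n hn)
      = ∑ m ∈ Finset.range ((k:ℕ)+1),
          (((-α)^((k:ℕ)-m) * ((k:ℕ).choose m : ℂ)) • A^m).mulVec (ev n hn) from
    map_sum (evalMap n hn) _ _]
  apply Submodule.sum_mem
  intro m hm
  rw [Matrix.smul_mulVec]
  apply Submodule.smul_mem
  apply Submodule.subset_span
  exact ⟨⟨m, by have := Finset.mem_range.mp hm; omega⟩, rfl⟩

lemma killer (hupper : ∀ i j : Fin n, (j : ℕ) < (i : ℕ) → A i j = 0)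
    (hdiag : ∀ i : Fin n, A i i = α)
    (hsuper : ∀ i : Fin n, ∀ h : (i : ℕ) + 1 < n, A i ⟨(i : ℕ) + 1, h⟩ ≠ 0)
    (hn : 0 < n)
    (M : Matrix (Fin n) (Fin n) ℂ) (hM : A * M = M * A)
    (h0 : M.mulVec (ev n hn) = 0) : M = 0 := by
  have hall : ∀ x : Fin n → ℂ, M.mulVec x = 0 := by
    intro x
    have hx : x ∈ Submodule.span ℂ
        (Set.range (fun k : Fin n => (A^(k:ℕ)).mulVec (ev n hn))) := by
      rw [span_Apow_top hupper hdiag hsuper hn]; trivial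
    induction hx using Submodule.span_induction with
    | mem y hy =>
      obtain ⟨k, rfl⟩ := hy
      have hAM : Commute A M := hM
      have hc : M * A ^ (k:ℕ) = A ^ (k:ℕ) * M := (hAM.pow_left (k:ℕ)).symm
      rw [Matrix.mulVec_mulVec, hc, ← Matrix.mulVec_mulVec, h0, Matrix.mulVec_zero]
    | zero => exact Matrix.mulVec_zero M
    | add y z _ _ hy hz => rw [Matrix.mulVec_add, hy, hz, add_zero]
    | smul a y _ hy => rw [Matrix.mulVec_smul, hy, smul_zero]
  ext i j
  have := congrFun (hall (Pi.single j 1)) i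
  rwa [Matrix.mulVec_single_one] at this

lemma mem_span_pows (hupper : ∀ i j : Fin n, (j : ℕ) < (i : ℕ) → A i j = 0)
    (hdiag : ∀ i : Fin n, A i i = α)
    (hsuper : ∀ i : Fin n, ∀ h : (i : ℕ) + 1 < n, A i ⟨(i : ℕ) + 1, h⟩ ≠ 0)
    (hn : 0 < n)
    (B : Matrix (Fin n) (Fin n) ℂ) (hB : A * B = B * A) :
    B ∈ Submodule.span ℂ {M : Matrix (Fin n) (Fin n) ℂ | ∃ k < n, M = A ^ k} := by
  have hBe : B.mulVec (ev n hn) ∈ Submodule.span ℂ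
      (Set.range (fun k : Fin n => (A^(k:ℕ)).mulVec (ev n hn))) := by
    rw [span_Apow_top hupper hdiag hsuper hn]; trivial
  obtain ⟨c, hc⟩ := (Submodule.mem_span_range_iff_exists_fun ℂ).mp hBe
  set P : Matrix (Fin n) (Fin n) ℂ := ∑ k : Fin n, c k • A^(k:ℕ) with hP
  have hAP : Commute A P := by
    apply Commute.sum_right
    intro k _
    exact ((Commute.refl A).pow_right (k:ℕ)).smul_right (c k)
  have hPe : P.mulVec (ev n hn) = B.mulVec (ev n hn) := by
    rw [hP]
    rw [show (∑ k : Fin n, c k • A^(k:ℕ)).mulVec (ev n hn)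
        = ∑ k : Fin n, (c k • A^(k:ℕ)).mulVec (ev n hn) from
      map_sum (evalMap n hn) _ _]
    simp only [Matrix.smul_mulVec]
    exact hc
  have hBP : B - P = 0 := by
    apply killer hupper hdiag hsuper hn
    · rw [mul_sub, sub_mul, hB, hAP.eq]
    · rw [Matrix.sub_mulVec, hPe, sub_self]
  have hBeq : B = P := by rwa [sub_eq_zero] at hBP
  rw [hBeq, hP]
  apply Submodule.sum_mem
  intro k _
  exact Submodule.smul_mem _ _ (Submodule.subset_span ⟨(k:ℕ), k.isLt, rfl⟩)

lemma finrank_centralizer (hupper : ∀ i j : Fin n, (j : ℕ) < (i : ℕ) → A i j = 0)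
    (hdiag : ∀ i : Fin n, A i i = α)
    (hsuper : ∀ i : Fin n, ∀ h : (i : ℕ) + 1 < n, A i ⟨(i : ℕ) + 1, h⟩ ≠ 0)
    (hn : 0 < n) :
    Module.finrank ℂ
      (Subalgebra.centralizer ℂ ({A} : Set (Matrix (Fin n) (Fin n) ℂ))) = n := by
  set W := Subalgebra.toSubmodule
    (Subalgebra.centralizer ℂ ({A} : Set (Matrix (Fin n) (Fin n) ℂ))) with hW
  have hmem : ∀ M : Matrix (Fin n) (Fin n) ℂ, M ∈ W ↔ A * M = M * A := by
    intro M
    rw [hW, Subalgebra.mem_toSubmodule, Subalgebra.mem_centralizer_iff]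
    constructor
    · intro h; exact h A rfl
    · rintro h g rfl; exact h
  set ψ := (evalMap n hn).domRestrict W with hψ
  have hinj : Function.Injective ψ := by
    rw [← LinearMap.ker_eq_bot, LinearMap.ker_eq_bot']
    rintro ⟨M, hM⟩ h
    have : M = 0 := killer hupper hdiag hsuper hn M ((hmem M).mp hM) h
    exact Subtype.ext this
  have hsurj : Function.Surjective ψ := by
    intro y
    have hy : y ∈ Submodule.span ℂ
        (Set.range (fun k : Fin n => (A^(k:ℕ)).mulVec (ev n hn))) := by
      rw [span_Apow_top hupper hdiag hsuper hn]; trivial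
    obtain ⟨c, hc⟩ := (Submodule.mem_span_range_iff_exists_fun ℂ).mp hy
    refine ⟨⟨∑ k : Fin n, c k • A^(k:ℕ), ?_⟩, ?_⟩
    · rw [hmem]
      have : Commute A (∑ k : Fin n, c k • A^(k:ℕ)) := by
        apply Commute.sum_right
        intro k _
        exact ((Commute.refl A).pow_right (k:ℕ)).smul_right (c k)
      exact this.eq
    · show (∑ k : Fin n, c k • A^(k:ℕ)).mulVec (ev n hn) = y
      rw [show (∑ k : Fin n, c k • A^(k:ℕ)).mulVec (ev n hn)
          = ∑ k : Fin n, (c k • A^(k:ℕ)).mulVec (ev n hn) from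
        map_sum (evalMap n hn) _ _]
      simp only [Matrix.smul_mulVec]
      exact hc
  have equiv := LinearEquiv.ofBijective ψ ⟨hinj, hsurj⟩
  have := equiv.finrank_eq
  rw [Module.finrank_pi, Fintype.card_fin] at this
  exact this

lemma similar_jordan (hupper : ∀ i j : Fin n, (j : ℕ) < (i : ℕ) → A i j = 0)
    (hdiag : ∀ i : Fin n, A i i = α)
    (hsuper : ∀ i : Fin n, ∀ h : (i : ℕ) + 1 < n, A i ⟨(i : ℕ) + 1, h⟩ ≠ 0)
    (hn : 0 < n) :
    ∃ X : Matrix (Fin n) (Fin n) ℂ, IsUnit X ∧ A * X = X * jordanBlock n α := by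
  set X : Matrix (Fin n) (Fin n) ℂ :=
    Matrix.of (fun i j : Fin n => ((A - α • 1)^(n-1-(j:ℕ))).mulVec (ev n hn) i) with hX
  have hXapp : ∀ i j : Fin n, X i j = ((A - α • 1)^(n-1-(j:ℕ))).mulVec (ev n hn) i := by
    intro i j; rfl
  have hXtri : X.BlockTriangular id := by
    intro i j hij
    rw [hXapp]
    exact vanish hupper hdiag _ _ _ (by simp only [id] at hij; omega)
  have hXdiag : ∀ i : Fin n, X i i ≠ 0 := by
    intro i
    rw [hXapp]
    have h := nonvanish hupper hdiag hsuper hn (n-1-(i:ℕ)) (by omega)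
    have hidx : (⟨n-1-(n-1-(i:ℕ)), by omega⟩ : Fin n) = i := by
      apply Fin.ext
      simp only [Fin.val_mk]
      omega
    rwa [hidx] at h
  refine ⟨X, ?_, ?_⟩
  · rw [Matrix.isUnit_iff_isUnit_det, Matrix.det_of_upperTriangular hXtri,
      isUnit_iff_ne_zero]
    exact Finset.prod_ne_zero_iff.mpr fun i _ => hXdiag i
  · ext i j
    have hL : (A * X) i j
        = ((A - α • 1)^(n-1-(j:ℕ)+1)).mulVec (ev n hn) i
          + α * ((A - α • 1)^(n-1-(j:ℕ))).mulVec (ev n hn) i := by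
      have h1 : (A * X) i j = (A.mulVec (fun r => X r j)) i := by
        simp [Matrix.mul_apply, Matrix.mulVec, dotProduct]
      rw [h1]
      have h2 : A = (A - α • 1) + α • 1 := by rw [sub_add_cancel]
      rw [h2, Matrix.add_mulVec, Matrix.smul_mulVec, Matrix.one_mulVec]
      have h3 : (fun r => X r j) = ((A - α • 1)^(n-1-(j:ℕ))).mulVec (ev n hn) := by
        funext r; rw [hXapp]
      rw [h3, Matrix.mulVec_mulVec, ← pow_succ']
      simp [Pi.add_apply, Pi.smul_apply, smul_eq_mul]
    rw [hL]
    by_cases hj : (j : ℕ) = 0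
    · have hRHS : (X * jordanBlock n α) i j = X i j * α := by
        rw [Matrix.mul_apply]
        have hs : ∑ b : Fin n, X i b * jordanBlock n α b j
            = X i j * jordanBlock n α j j := by
          apply Finset.sum_eq_single j
          · intro b _ hb
            have hbv : (b:ℕ) ≠ (j:ℕ) := fun h => hb (Fin.ext h)
            have : jordanBlock n α b j = 0 := by
              rw [jordanBlock]
              simp only [hbv, if_false]
              rw [if_neg (by omega)]
            rw [this, mul_zero]
          · intro h; exact absurd (Finset.mem_univ j) h
        rw [hs]
        have : jordanBlock n α j j = α := by rw [jordanBlock]; simp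
        rw [this]
      rw [hRHS, hXapp, hj]
      rw [show n-1-0+1 = n from by omega]
      rw [vanish hupper hdiag _ n i (by omega), zero_add, mul_comm]
    · set jm : Fin n := ⟨(j:ℕ)-1, by omega⟩ with hjm
      have hjmv : (jm:ℕ) = (j:ℕ)-1 := by rw [hjm]
      have hRHS : (X * jordanBlock n α) i j = X i j * α + X i jm := by
        rw [Matrix.mul_apply]
        have hsplit : ∀ b : Fin n, X i b * jordanBlock n α b j
            = (if b = j then X i j * α else 0) + (if b = jm then X i jm else 0) := by
          intro b
          have hJdef : jordanBlock n α b j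
              = if (b:ℕ) = (j:ℕ) then α else if (b:ℕ)+1 = (j:ℕ) then 1 else 0 := rfl
          rw [hJdef]
          by_cases hb1 : (b:ℕ) = (j:ℕ)
          · have hbj : b = j := Fin.ext hb1
            have hnejm : b ≠ jm := by
              intro h
              have hv := congrArg Fin.val h
              omega
            rw [if_pos hb1, if_pos hbj, if_neg hnejm, add_zero, hbj]
          · by_cases hb2 : (b:ℕ)+1 = (j:ℕ)
            · have hbjm : b = jm := Fin.ext (by omega)
              rw [if_neg hb1, if_pos hb2, if_neg (fun h => hb1 (congrArg Fin.val h)),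
                if_pos hbjm, zero_add, mul_one, hbjm]
            · have hbjm : b ≠ jm := by
                intro h
                have hv := congrArg Fin.val h
                omega
              rw [if_neg hb1, if_neg hb2,
                if_neg (fun h => hb1 (congrArg Fin.val h)), if_neg hbjm,
                mul_zero, add_zero]
        rw [Finset.sum_congr rfl (fun b _ => hsplit b), Finset.sum_add_distrib,
          Finset.sum_ite_eq' Finset.univ j, Finset.sum_ite_eq' Finset.univ jm]
        simp
      rw [hRHS, hXapp, hXapp]
      have hexp : n-1-((jm:ℕ)) = n-1-(j:ℕ)+1 := by omega
      rw [hexp]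
      ring

lemma conj_commutant {X : Matrix (Fin n) (Fin n) ℂ}
    (hXu : IsUnit X) (hAX : A * X = X * jordanBlock n α) :
    {B : Matrix (Fin n) (Fin n) ℂ | A * B = B * A} =
      (fun B => X * B * X⁻¹) ''
        {B : Matrix (Fin n) (Fin n) ℂ |
          jordanBlock n α * B = B * jordanBlock n α} := by
  set J := jordanBlock n α with hJdef
  have hd : IsUnit X.det := (Matrix.isUnit_iff_isUnit_det X).mp hXu
  have h1 : X * X⁻¹ = 1 := Matrix.mul_nonsing_inv X hd
  have h2 : X⁻¹ * X = 1 := Matrix.nonsing_inv_mul X hd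
  have hXX : ∀ Z : Matrix (Fin n) (Fin n) ℂ, X * (X⁻¹ * Z) = Z := fun Z => by
    rw [← mul_assoc, h1, one_mul]
  have hXX' : ∀ Z : Matrix (Fin n) (Fin n) ℂ, X⁻¹ * (X * Z) = Z := fun Z => by
    rw [← mul_assoc, h2, one_mul]
  have hA : A = X * J * X⁻¹ := by
    rw [← hAX, mul_assoc, h1, mul_one]
  have hJ : J = X⁻¹ * (A * X) := by rw [hAX, ← mul_assoc, h2, one_mul]
  ext B
  simp only [Set.mem_setOf_eq, Set.mem_image]
  constructor
  · intro hB
    refine ⟨X⁻¹ * B * X, ?_, ?_⟩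
    · show J * (X⁻¹ * B * X) = (X⁻¹ * B * X) * J
      rw [hJ]
      simp only [mul_assoc, hXX, hXX']
      congr 1
      rw [← mul_assoc, ← mul_assoc, hB]
    · show X * (X⁻¹ * B * X) * X⁻¹ = B
      simp only [mul_assoc, hXX, h1, mul_one]
  · rintro ⟨C, hC, rfl⟩
    show A * (X * C * X⁻¹) = (X * C * X⁻¹) * A
    rw [hA]
    simp only [mul_assoc, hXX, hXX']
    congr 1
    rw [← mul_assoc, ← mul_assoc, hC]

lemma commutant_eq_span (hupper : ∀ i j : Fin n, (j : ℕ) < (i : ℕ) → A i j = 0)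
    (hdiag : ∀ i : Fin n, A i i = α)
    (hsuper : ∀ i : Fin n, ∀ h : (i : ℕ) + 1 < n, A i ⟨(i : ℕ) + 1, h⟩ ≠ 0)
    (hn : 0 < n) :
    {B : Matrix (Fin n) (Fin n) ℂ | A * B = B * A} =
      (Submodule.span ℂ {M : Matrix (Fin n) (Fin n) ℂ | ∃ k < n, M = A ^ k} :
        Set (Matrix (Fin n) (Fin n) ℂ)) := by
  ext B
  simp only [Set.mem_setOf_eq, SetLike.mem_coe]
  constructor
  · exact mem_span_pows hupper hdiag hsuper hn B
  · intro hB
    have hle : Submodule.span ℂ {M : Matrix (Fin n) (Fin n) ℂ | ∃ k < n, M = A ^ k}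
        ≤ Subalgebra.toSubmodule
          (Subalgebra.centralizer ℂ ({A} : Set (Matrix (Fin n) (Fin n) ℂ))) := by
      rw [Submodule.span_le]
      rintro M ⟨k, _, rfl⟩
      rw [SetLike.mem_coe, Subalgebra.mem_toSubmodule, Subalgebra.mem_centralizer_iff]
      intro g hg
      rw [Set.mem_singleton_iff] at hg
      rw [hg]
      exact ((Commute.refl A).pow_right k).eq
    have := hle hB
    rw [Subalgebra.mem_toSubmodule, Subalgebra.mem_centralizer_iff] at this
    exact this A rfl

end Stmt17Aux

theorem stmt_17 (n : ℕ) (α : ℂ) (A : Matrix (Fin n) (Fin n) ℂ)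
    (hupper : ∀ i j : Fin n, (j : ℕ) < (i : ℕ) → A i j = 0)
    (hdiag : ∀ i : Fin n, A i i = α)
    (hsuper : ∀ i : Fin n, ∀ h : (i : ℕ) + 1 < n, A i ⟨(i : ℕ) + 1, h⟩ ≠ 0) :
    (∃ X : Matrix (Fin n) (Fin n) ℂ, IsUnit X ∧ A * X = X * jordanBlock n α ∧
      {B : Matrix (Fin n) (Fin n) ℂ | A * B = B * A} =
        (fun B => X * B * X⁻¹) ''
          {B : Matrix (Fin n) (Fin n) ℂ |
            jordanBlock n α * B = B * jordanBlock n α}) ∧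
    Module.finrank ℂ
      (Subalgebra.centralizer ℂ ({A} : Set (Matrix (Fin n) (Fin n) ℂ))) = n ∧
    {B : Matrix (Fin n) (Fin n) ℂ | A * B = B * A} =
      (Submodule.span ℂ {M : Matrix (Fin n) (Fin n) ℂ | ∃ k < n, M = A ^ k} :
        Set (Matrix (Fin n) (Fin n) ℂ)) := by
  rcases Nat.eq_zero_or_pos n with hn | hn
  · subst hn
    refine ⟨⟨1, isUnit_one, Subsingleton.elim _ _, ?_⟩, ?_, ?_⟩
    · ext B
      simp only [Set.mem_setOf_eq, Set.mem_image]
      constructor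
      · intro _
        exact ⟨B, Subsingleton.elim _ _, Subsingleton.elim _ _⟩
      · intro _
        exact Subsingleton.elim _ _
    · exact Module.finrank_zero_of_subsingleton
    · ext B
      simp only [Set.mem_setOf_eq, SetLike.mem_coe]
      constructor
      · intro _
        have : B = 0 := Subsingleton.elim B 0
        rw [this]; exact Submodule.zero_mem _
      · intro _; exact Subsingleton.elim _ _
  · obtain ⟨X, hXu, hAX⟩ := Stmt17Aux.similar_jordan hupper hdiag hsuper hn
    exact ⟨⟨X, hXu, hAX, Stmt17Aux.conj_commutant hXu hAX⟩,
      Stmt17Aux.finrank_centralizer hupper hdiag hsuper hn,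
      Stmt17Aux.commutant_eq_span hupper hdiag hsuper hn⟩
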